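/- For any undirected graph G and any total order σ on V(G ×_e K_2), every σ-semi-induced matching M in G ×_e K_2 decomposes as M₁ ∪ M₂ where M₁ is a σ-semi-induced matching in G × K_2 and M₂ corresponds to an independent set in G; consequently sim(G ×_e K_2) ≤ sim(G × K_2) + α(G). -/

import Mathlib

/-!
An edge of `G ×_e K₂` either lies over an edge of `G`, and then it is an edge of the subgraph
`G × K₂`, or it is a vertical edge `(v,0)(v,1)`. The edges of the first kind still form a
semi-induced matching of `G × K₂`. Two vertical edges of a matching lie over distinct vertices
`v ≠ w`, and if `vw ∈ E(G)` then every endpoint of one is adjacent in `G ×_e K₂` to an endpoint of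
the other, which violates the semi-induced condition at the `σ`-least of the four endpoints. So the
vertical edges lie over an independent set of `G`.
-/

open SimpleGraph

def tensor {α β : Type*} (G : SimpleGraph α) (H : SimpleGraph β) :
    SimpleGraph (α × β) where
  Adj p q := G.Adj p.1 q.1 ∧ H.Adj p.2 q.2
  symm := ⟨fun p q h => ⟨h.1.symm, h.2.symm⟩⟩
  loopless := ⟨fun p h => G.irrefl h.1⟩

def etensor {α β : Type*} (G : SimpleGraph α) (H : SimpleGraph β) :
    SimpleGraph (α × β) where
  Adj p q := (G.Adj p.1 q.1 ∨ p.1 = q.1) ∧ H.Adj p.2 q.2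
  symm := ⟨fun p q h => ⟨h.1.imp (fun h' => h'.symm) (fun h' => h'.symm), h.2.symm⟩⟩
  loopless := ⟨fun p h => H.irrefl h.2⟩

def disj {α β : Type*} (G : SimpleGraph α) (H : SimpleGraph β) :
    SimpleGraph (α × β) where
  Adj p q := G.Adj p.1 q.1 ∨ H.Adj p.2 q.2
  symm := ⟨fun p q h => h.imp (fun h' => h'.symm) (fun h' => h'.symm)⟩
  loopless := ⟨fun p h => h.elim (G.irrefl) (H.irrefl)⟩

def lexProd {α β : Type*} (G : SimpleGraph α) (H : SimpleGraph β) :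
    SimpleGraph (α × β) where
  Adj p q := G.Adj p.1 q.1 ∨ (p.1 = q.1 ∧ H.Adj p.2 q.2)
  symm := ⟨fun p q h => h.imp (fun h' => h'.symm) (fun h' => ⟨h'.1.symm, h'.2.symm⟩)⟩
  loopless := ⟨fun p h => h.elim (G.irrefl) (fun h' => H.irrefl h'.2)⟩

def disjPow {α : Type*} (G : SimpleGraph α) (k : ℕ) : SimpleGraph (Fin k → α) where
  Adj x y := ∃ i, G.Adj (x i) (y i)
  symm := ⟨fun x y h => h.imp (fun i hi => hi.symm)⟩
  loopless := ⟨fun x h => h.elim (fun i hi => G.irrefl hi)⟩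

def lexPow {α : Type*} (G : SimpleGraph α) (k : ℕ) : SimpleGraph (Fin k → α) where
  Adj x y := ∃ i, G.Adj (x i) (y i) ∧ ∀ j, j < i → x j = y j
  symm := ⟨fun x y h => h.imp (fun i hi => ⟨hi.1.symm, fun j hj => (hi.2 j hj).symm⟩)⟩
  loopless := ⟨fun x h => h.elim (fun i hi => G.irrefl hi.1)⟩

def IsIndMatching {V : Type*} (G : SimpleGraph V) {n : ℕ} (a b : Fin n → V) : Prop :=
  (∀ i, G.Adj (a i) (b i)) ∧
  ∀ i j, i ≠ j → ¬ G.Adj (a i) (a j) ∧ ¬ G.Adj (a i) (b j) ∧ ¬ G.Adj (b i) (b j)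

noncomputable def imNum {V : Type*} (G : SimpleGraph V) : ℕ :=
  sSup {n | ∃ a b : Fin n → V, IsIndMatching G a b}

def SemiCond {V : Type*} (G : SimpleGraph V) (σ : V → ℕ) (u u' v v' : V) : Prop :=
  σ u < σ u' → σ u < σ v → σ v < σ v' → ¬ G.Adj u v ∧ ¬ G.Adj u v'

def IsSemiIndMatching {V : Type*} (G : SimpleGraph V) (σ : V → ℕ) {n : ℕ}
    (a b : Fin n → V) : Prop :=
  (∀ i, G.Adj (a i) (b i)) ∧
  (∀ i j, i ≠ j → a i ≠ a j ∧ a i ≠ b j ∧ b i ≠ b j) ∧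
  (∀ i j, i ≠ j →
    SemiCond G σ (a i) (b i) (a j) (b j) ∧ SemiCond G σ (a i) (b i) (b j) (a j) ∧
    SemiCond G σ (b i) (a i) (a j) (b j) ∧ SemiCond G σ (b i) (a i) (b j) (a j))

noncomputable def simNumOrd {V : Type*} (G : SimpleGraph V) (σ : V → ℕ) : ℕ :=
  sSup {n | ∃ a b : Fin n → V, IsSemiIndMatching G σ a b}

noncomputable def simNum {V : Type*} (G : SimpleGraph V) : ℕ :=
  sSup {n | ∃ σ : V → ℕ, Function.Injective σ ∧
    ∃ a b : Fin n → V, IsSemiIndMatching G σ a b}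

noncomputable def indepNum {V : Type*} (G : SimpleGraph V) : ℕ :=
  sSup {n | ∃ s : Finset V, s.card = n ∧ ∀ u ∈ s, ∀ v ∈ s, ¬ G.Adj u v}

noncomputable def chromNum {V : Type*} (G : SimpleGraph V) : ℕ :=
  sInf {n | G.Colorable n}

def vecLT {d : ℕ} (x y : Fin d → ℝ) : Prop := (∀ i, x i ≤ y i) ∧ ∃ i, x i < y i

def Realizes {V : Type*} (R : V → V → Prop) {d : ℕ} (φ : V → Fin d → ℝ) : Prop :=
  ∀ u v, u ≠ v → (R u v ↔ vecLT (φ u) (φ v))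

noncomputable def posetDim {V : Type*} (R : V → V → Prop) : ℕ :=
  sInf {d | ∃ φ : V → Fin d → ℝ, Realizes R φ}

def IsHeightTwoPoset {V : Type*} (R : V → V → Prop) : Prop :=
  (∀ u, ¬ Relation.TransGen R u u) ∧
  (∀ u v w, R u v → R v w → R u w) ∧
  (∀ u, (∀ v, ¬ R v u) ∨ (∀ v, ¬ R u v))

def etensorRel {α β : Type*} (G : SimpleGraph α) (R : β → β → Prop) :
    α × β → α × β → Prop :=
  fun p q => (G.Adj p.1 q.1 ∨ p.1 = q.1) ∧ R p.2 q.2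

def tensorRel {α β : Type*} (G : SimpleGraph α) (R : β → β → Prop) :
    α × β → α × β → Prop :=
  fun p q => G.Adj p.1 q.1 ∧ R p.2 q.2

def K2dir : Fin 2 → Fin 2 → Prop := fun i j => i = 0 ∧ j = 1

open Function

lemma Fintype.exists_split_by_pred {α : Type*} [Fintype α] (P : α → Prop) :
    ∃ (n₁ n₂ : ℕ) (f : Fin n₁ → α) (g : Fin n₂ → α),
      Fintype.card α = n₁ + n₂ ∧ Injective f ∧ Injective g ∧ (∀ i j, f i ≠ g j) ∧
      (∀ i, ¬ P (f i)) ∧ ∀ j, P (g j) := by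
  classical
  let e₁ := (Fintype.equivFin {x // ¬ P x}).symm
  let e₂ := (Fintype.equivFin {x // P x}).symm
  have hdisj (i j) (h : (e₁ i : α) = e₂ j) : False := (e₁ i).2 (h ▸ (e₂ j).2)
  refine ⟨_, _, Subtype.val ∘ e₁, Subtype.val ∘ e₂, ?_, Subtype.val_injective.comp e₁.injective,
    Subtype.val_injective.comp e₂.injective, hdisj, fun i => (e₁ i).2, fun j => (e₂ j).2⟩
  have := Fintype.card_subtype_compl P
  have := Fintype.card_subtype_le P
  omega

section SemiInduced

variable {V : Type*} {G H : SimpleGraph V} {σ : V → ℕ} {n : ℕ} {a b : Fin n → V}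

lemma SemiCond.of_le (hHG : H ≤ G) {u u' v v' : V} (h : SemiCond G σ u u' v v') :
    SemiCond H σ u u' v v' := fun h₁ h₂ h₃ =>
  (h h₁ h₂ h₃).imp (mt (@hHG _ _)) (mt (@hHG _ _))

lemma IsSemiIndMatching.comp_of_le (hM : IsSemiIndMatching G σ a b) (hHG : H ≤ G) {m : ℕ}
    {f : Fin m → Fin n} (hf : Injective f) (hadj : ∀ i, H.Adj (a (f i)) (b (f i))) :
    IsSemiIndMatching H σ (a ∘ f) (b ∘ f) := by
  refine ⟨hadj, fun i j hij => hM.2.1 _ _ (hf.ne hij), fun i j hij => ?_⟩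
  obtain ⟨h₁, h₂, h₃, h₄⟩ := hM.2.2 _ _ (hf.ne hij)
  exact ⟨h₁.of_le hHG, h₂.of_le hHG, h₃.of_le hHG, h₄.of_le hHG⟩

lemma IsSemiIndMatching.injective_left (hM : IsSemiIndMatching G σ a b) : Injective a :=
  fun i j h => by_contra fun hij => (hM.2.1 i j hij).1 h

lemma IsSemiIndMatching.ne_of_mem (hM : IsSemiIndMatching G σ a b) {i j : Fin n} (hij : i ≠ j)
    {u v : V} (hu : u ∈ s(a i, b i)) (hv : v ∈ s(a j, b j)) : u ≠ v := by
  obtain ⟨haa, hab, hbb⟩ := hM.2.1 i j hij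
  have hba := (hM.2.1 j i hij.symm).2.1
  rcases Sym2.mem_iff.1 hu with rfl | rfl <;> rcases Sym2.mem_iff.1 hv with rfl | rfl
  exacts [haa, hab, hba.symm, hbb]

lemma IsSemiIndMatching.not_adj_of_lt (hM : IsSemiIndMatching G σ a b) {i j : Fin n} (hij : i ≠ j)
    {u u' v v' : V} (hu : s(u, u') = s(a i, b i)) (hv : s(v, v') = s(a j, b j))
    (h₁ : σ u < σ u') (h₂ : σ u < σ v) (h₃ : σ v < σ v') :
    ¬ G.Adj u (a j) ∧ ¬ G.Adj u (b j) := by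
  obtain ⟨hab_ab, hab_ba, hba_ab, hba_ba⟩ := hM.2.2 i j hij
  rcases Sym2.eq_iff.1 hu with ⟨rfl, rfl⟩ | ⟨rfl, rfl⟩ <;>
    rcases Sym2.eq_iff.1 hv with ⟨rfl, rfl⟩ | ⟨rfl, rfl⟩
  exacts [hab_ab h₁ h₂ h₃, (hab_ba h₁ h₂ h₃).symm, hba_ab h₁ h₂ h₃, (hba_ba h₁ h₂ h₃).symm]

lemma exists_sym2_eq_and_lt (hσ : Injective σ) {x y : V} (hxy : x ≠ y) :
    ∃ u u', s(u, u') = s(x, y) ∧ σ u < σ u' := by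
  rcases (hσ.ne hxy).lt_or_gt with h | h
  exacts [⟨x, y, rfl, h⟩, ⟨y, x, Sym2.eq_swap, h⟩]

/-- The `σ`-first of the four endpoints of two edges is adjacent to neither end of the other edge. -/
lemma IsSemiIndMatching.exists_not_adj (hσ : Injective σ) (hM : IsSemiIndMatching G σ a b)
    {i j : Fin n} (hij : i ≠ j) :
    ∃ k l, s(k, l) = s(i, j) ∧ ∃ u ∈ s(a k, b k), ¬ G.Adj u (a l) ∧ ¬ G.Adj u (b l) := by
  obtain ⟨u, u', hu, hlt⟩ := exists_sym2_eq_and_lt hσ (hM.1 i).ne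
  obtain ⟨v, v', hv, hlt'⟩ := exists_sym2_eq_and_lt hσ (hM.1 j).ne
  have hu_mem : u ∈ s(a i, b i) := hu ▸ Sym2.mem_mk_left _ _
  have hv_mem : v ∈ s(a j, b j) := hv ▸ Sym2.mem_mk_left _ _
  rcases (hσ.ne (hM.ne_of_mem hij hu_mem hv_mem)).lt_or_gt with h | h
  · exact ⟨i, j, rfl, u, hu_mem, hM.not_adj_of_lt hij hu hv hlt h hlt'⟩
  · exact ⟨j, i, Sym2.eq_swap, v, hv_mem, hM.not_adj_of_lt hij.symm hv hu hlt' h hlt⟩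

end SemiInduced

section Product

variable {V : Type*} {G : SimpleGraph V}

lemma tensor_le_etensor {β : Type*} (H : SimpleGraph β) : tensor G H ≤ etensor G H :=
  fun _ _ h => ⟨Or.inl h.1, h.2⟩

lemma eq_or_eq_of_fst_eq {r p q : V × Fin 2} (hrp : r.1 = p.1) (hpq : p.1 = q.1) (hne : p ≠ q) :
    r = p ∨ r = q := by
  have : p.2 ≠ q.2 := fun h => hne (Prod.ext hpq h)
  have : r.2 = p.2 ∨ r.2 = q.2 := by omega
  exact this.imp (Prod.ext hrp) (Prod.ext (hrp.trans hpq))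

lemma etensor_top_adj_or_adj {u p q : V × Fin 2} (hG : G.Adj u.1 p.1) (hpq : p.1 = q.1)
    (hne : p ≠ q) : (etensor G ⊤).Adj u p ∨ (etensor G ⊤).Adj u q := by
  have : p.2 ≠ q.2 := fun h => hne (Prod.ext hpq h)
  have : u.2 ≠ p.2 ∨ u.2 ≠ q.2 := by omega
  exact this.imp (fun h => ⟨Or.inl hG, (top_adj _ _).2 h⟩)
    (fun h => ⟨Or.inl (hpq ▸ hG), (top_adj _ _).2 h⟩)

variable {σ : V × Fin 2 → ℕ} {n : ℕ} {a b : Fin n → V × Fin 2} {i j : Fin n}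

lemma IsSemiIndMatching.fst_ne_of_etensor_top (hM : IsSemiIndMatching (etensor G ⊤) σ a b)
    (hij : i ≠ j) (hi : (a i).1 = (b i).1) : (a i).1 ≠ (a j).1 := fun h =>
  (eq_or_eq_of_fst_eq h.symm hi (hM.1 i).ne).elim
    (fun h' => (hM.2.1 i j hij).1 h'.symm) (fun h' => (hM.2.1 j i hij.symm).2.1 h')

lemma IsSemiIndMatching.not_adj_fst_of_etensor_top (hσ : Injective σ)
    (hM : IsSemiIndMatching (etensor G ⊤) σ a b) (hij : i ≠ j)
    (hi : (a i).1 = (b i).1) (hj : (a j).1 = (b j).1) : ¬ G.Adj (a i).1 (a j).1 := by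
  intro hG
  obtain ⟨k, l, hkl, u, hu, hna, hnb⟩ := hM.exists_not_adj hσ hij
  obtain ⟨hk, hl, hG'⟩ : (a k).1 = (b k).1 ∧ (a l).1 = (b l).1 ∧ G.Adj (a k).1 (a l).1 := by
    rcases Sym2.eq_iff.1 hkl with ⟨rfl, rfl⟩ | ⟨rfl, rfl⟩
    exacts [⟨hi, hj, hG⟩, ⟨hj, hi, hG.symm⟩]
  have hu₁ : u.1 = (a k).1 := by
    rcases Sym2.mem_iff.1 hu with rfl | rfl
    exacts [rfl, hk.symm]
  exact (etensor_top_adj_or_adj (hu₁ ▸ hG') hl (hM.1 l).ne).elim hna hnb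

lemma IsSemiIndMatching.exists_split_of_etensor_top (hσ : Injective σ)
    (hM : IsSemiIndMatching (etensor G ⊤) σ a b) :
    ∃ (n₁ n₂ : ℕ) (f : Fin n₁ → Fin n) (g : Fin n₂ → Fin n),
      n = n₁ + n₂ ∧ Injective f ∧ Injective g ∧ (∀ i j, f i ≠ g j) ∧
      IsSemiIndMatching (tensor G ⊤) σ (a ∘ f) (b ∘ f) ∧
      (∀ j, (a (g j)).1 = (b (g j)).1) ∧
      (∀ j j', j ≠ j' → (a (g j)).1 ≠ (a (g j')).1 ∧ ¬ G.Adj (a (g j)).1 (a (g j')).1) := by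
  obtain ⟨n₁, n₂, f, g, hn, hf, hg, hfg, hfP, hgP⟩ :=
    Fintype.exists_split_by_pred fun i => (a i).1 = (b i).1
  refine ⟨n₁, n₂, f, g, by simpa using hn, hf, hg, hfg,
    hM.comp_of_le (tensor_le_etensor ⊤) hf
      fun i => ⟨(hM.1 (f i)).1.resolve_right (hfP i), (hM.1 (f i)).2⟩,
    hgP, fun j j' hjj' => ⟨hM.fst_ne_of_etensor_top (hg.ne hjj') (hgP j),
      hM.not_adj_fst_of_etensor_top hσ (hg.ne hjj') (hgP j) (hgP j')⟩⟩

end Product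

lemma le_simNum {W : Type*} [Fintype W] {H : SimpleGraph W} {σ : W → ℕ} (hσ : Injective σ)
    {n : ℕ} {a b : Fin n → W} (hM : IsSemiIndMatching H σ a b) : n ≤ simNum H := by
  refine le_csSup ⟨Fintype.card W, ?_⟩ ⟨σ, hσ, a, b, hM⟩
  rintro m ⟨τ, -, c, d, hc⟩
  simpa using Fintype.card_le_of_injective c hc.injective_left

lemma le_indepNum {V : Type*} [Fintype V] {G : SimpleGraph V} {m : ℕ} {φ : Fin m → V}
    (hφ : Injective φ) (hind : ∀ j j', j ≠ j' → ¬ G.Adj (φ j) (φ j')) :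
    m ≤ _root_.indepNum G := by
  classical
  refine le_csSup ⟨Fintype.card V, ?_⟩ ⟨Finset.univ.map ⟨φ, hφ⟩, by simp, ?_⟩
  · rintro k ⟨s, rfl, -⟩
    exact s.card_le_univ
  · simp only [Finset.mem_map, Finset.mem_univ, true_and, Embedding.coeFn_mk]
    rintro _ ⟨j, rfl⟩ _ ⟨j', rfl⟩
    by_cases h : j = j'
    · exact h ▸ G.irrefl
    · exact hind j j' h

theorem stmt4 {V : Type*} [Fintype V] (G : SimpleGraph V) :
    (∀ (σ : V × Fin 2 → ℕ), Function.Injective σ →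
      ∀ (n : ℕ) (a b : Fin n → V × Fin 2),
        IsSemiIndMatching (etensor G (⊤ : SimpleGraph (Fin 2))) σ a b →
        ∃ (n₁ n₂ : ℕ) (f : Fin n₁ → Fin n) (g : Fin n₂ → Fin n),
          n = n₁ + n₂ ∧ Function.Injective f ∧ Function.Injective g ∧
          (∀ i j, f i ≠ g j) ∧
          IsSemiIndMatching (tensor G (⊤ : SimpleGraph (Fin 2))) σ (a ∘ f) (b ∘ f) ∧
          (∀ j, (a (g j)).1 = (b (g j)).1) ∧
          (∀ j j', j ≠ j' → (a (g j)).1 ≠ (a (g j')).1 ∧ ¬ G.Adj (a (g j)).1 (a (g j')).1)) ∧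
    simNum (etensor G (⊤ : SimpleGraph (Fin 2))) ≤
      simNum (tensor G (⊤ : SimpleGraph (Fin 2))) + _root_.indepNum G := by
  refine ⟨fun σ hσ n a b hM => hM.exists_split_of_etensor_top hσ, csSup_le' ?_⟩
  rintro n ⟨σ, hσ, a, b, hM⟩
  obtain ⟨n₁, n₂, f, g, rfl, -, -, -, hM₁, -, hind⟩ := hM.exists_split_of_etensor_top hσ
  have hinj : Injective fun j => (a (g j)).1 := fun j j' h =>
    by_contra fun hne => (hind j j' hne).1 h
  exact add_le_add (le_simNum hσ hM₁) (le_indepNum hinj fun j j' h => (hind j j' h).2)
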